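/- Fix I ⊂ {1,...,N} with |I| = s-1 and let σ ∈ S_N map {1,...,s-1} onto I, decomposing as σ = (σ_1(λ_1), σ_2(λ_2)) with λ_1 ∈ S_{|I|}, λ_2 ∈ S_{|I^c|}. Then B_σ(ξ) = B_{λ_1}(ξ; I) · G(ξ; I, I^c) · B_{λ_2}(ξ; I^c) · (∏_{j=s}^{N} ξ_{σ(j)})^{|I|}. -/

import Mathlib

open Finset

/-- `B_σ(ξ) = sgn(σ) ∏_{i<j}(1+ξ_{σ(i)}ξ_{σ(j)}-2Δξ_{σ(i)}) ∏_j ξ_{σ(j)}^j`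
(positions indexed `1,…,n`). -/
noncomputable def betheB (n : ℕ) (Δ : ℝ) (ξ : Fin n → ℂ) (σ : Equiv.Perm (Fin n)) : ℂ :=
  ((Equiv.Perm.sign σ : ℤ) : ℂ) *
    (∏ p ∈ Finset.univ.filter (fun p : Fin n × Fin n => p.1 < p.2),
      (1 + ξ (σ p.1) * ξ (σ p.2) - 2 * (Δ : ℂ) * ξ (σ p.1))) *
    ∏ j, ξ (σ j) ^ ((j : ℕ) + 1)

/-- `G(ξ; A, B) = ∏_{α∈A, β∈B} (1+ξ_αξ_β - 2Δξ_α) · ∏_{α∈A, β∈B, α>β} (-1)`. -/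
noncomputable def betheG (N : ℕ) (Δ : ℝ) (ξ : Fin N → ℂ) (A B : Finset (Fin N)) : ℂ :=
  (∏ α ∈ A, ∏ β ∈ B, (1 + ξ α * ξ β - 2 * (Δ : ℂ) * ξ α)) *
    ∏ α ∈ A, ∏ β ∈ B, (if β < α then (-1 : ℂ) else 1)

/- ### Auxiliary lemmas -/

lemma stmt10aux_sign_eq_signAux {n : ℕ} (f : Equiv.Perm (Fin n)) :
    Equiv.Perm.sign f = Equiv.Perm.signAux f := by
  induction f using Equiv.Perm.swap_induction_on
  case _ => simp [Equiv.Perm.signAux_one]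
  case _ f x y hxy ih =>
    rw [Equiv.Perm.sign_mul, Equiv.Perm.signAux_mul, ih, Equiv.Perm.sign_swap hxy,
      Equiv.Perm.signAux_swap hxy]

lemma stmt10aux_sign_eq_prod_pairs {n : ℕ} (f : Equiv.Perm (Fin n)) :
    ((Equiv.Perm.sign f : ℤ) : ℂ) =
      ∏ p ∈ Finset.univ.filter (fun p : Fin n × Fin n => p.1 < p.2),
        (if f p.2 < f p.1 then (-1 : ℂ) else 1) := by
  rw [stmt10aux_sign_eq_signAux]
  unfold Equiv.Perm.signAux
  push_cast
  refine Finset.prod_bij' (fun a _ => (a.2, a.1)) (fun p _ => ⟨p.2, p.1⟩) ?_ ?_ ?_ ?_ ?_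
  · intro a ha
    simp only [Equiv.Perm.mem_finPairsLT] at ha
    simp [ha]
  · intro p hp
    simp only [mem_filter, mem_univ, true_and] at hp
    simpa [Equiv.Perm.mem_finPairsLT] using hp
  · intro a _; rfl
  · intro p _; rfl
  · intro a ha
    simp only [Equiv.Perm.mem_finPairsLT] at ha
    by_cases h : f a.1 ≤ f a.2
    · have hne : f a.1 ≠ f a.2 := fun h' => absurd (f.injective h') (ne_of_gt ha)
      rw [if_pos h, if_pos (lt_of_le_of_ne h hne)]
      simp
    · rw [if_neg h, if_neg (fun h' => h h'.le)]
      simp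

lemma stmt10aux_L1 {N m : ℕ} (hmN : m ≤ N) (g : Fin N → ℂ) :
    ∏ j ∈ Finset.univ.filter (fun j : Fin N => (j : ℕ) < m), g j
      = ∏ a : Fin m, g (Fin.castLE hmN a) := by
  refine (Finset.prod_bij' (fun (a : Fin m) _ => Fin.castLE hmN a)
    (fun j hj => ⟨(j : ℕ), by simpa using hj⟩) ?_ ?_ ?_ ?_ ?_).symm
  · intro a _; simp [a.isLt]
  · intro j _; exact mem_univ _
  · intro a _; rfl
  · intro j _; rfl
  · intro a _; rfl

lemma stmt10aux_L2 {N m : ℕ} (g : Fin N → ℂ) :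
    ∏ j ∈ Finset.univ.filter (fun j : Fin N => m ≤ (j : ℕ)), g j
      = ∏ b : Fin (N - m), g ⟨m + (b : ℕ), by omega⟩ := by
  refine (Finset.prod_bij' (fun (b : Fin (N - m)) _ => (⟨m + (b : ℕ), by omega⟩ : Fin N))
    (fun j hj => ⟨(j : ℕ) - m, by have := j.isLt; have := (mem_filter.mp hj).2; omega⟩)
    ?_ ?_ ?_ ?_ ?_).symm
  · intro b _; simp
  · intro j _; exact mem_univ _
  · intro b _; simp
  · intro j hj
    have := (mem_filter.mp hj).2
    ext; simp; omega
  · intro b _; rfl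

lemma stmt10aux_L3 {N m : ℕ} (I : Finset (Fin N)) (hI : I.card = m) (h : Fin N → ℂ) :
    ∏ a : Fin m, h ((I.orderIsoOfFin hI a : Fin N)) = ∏ α ∈ I, h α := by
  refine Finset.prod_bij' (fun a _ => ((I.orderIsoOfFin hI a : Fin N)))
    (fun α hα => (I.orderIsoOfFin hI).symm ⟨α, hα⟩) ?_ ?_ ?_ ?_ ?_
  · intro a _; exact (I.orderIsoOfFin hI a).2
  · intro α _; exact mem_univ _
  · intro a _; exact (I.orderIsoOfFin hI).symm_apply_apply a
  · intro α hα; simp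
  · intro a _; rfl

lemma stmt10aux_L4 {N m : ℕ} (hmN : m ≤ N) (F : Fin N → Fin N → ℂ) :
    ∏ p ∈ Finset.univ.filter (fun p : Fin N × Fin N => p.1 < p.2 ∧ (p.2 : ℕ) < m), F p.1 p.2
      = ∏ p ∈ Finset.univ.filter (fun p : Fin m × Fin m => p.1 < p.2),
          F (Fin.castLE hmN p.1) (Fin.castLE hmN p.2) := by
  refine (Finset.prod_bij' (fun (p : Fin m × Fin m) _ => (Fin.castLE hmN p.1, Fin.castLE hmN p.2))
    (fun p hp => (⟨(p.1 : ℕ), by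
        have h := (mem_filter.mp hp).2; have := Fin.lt_def.mp h.1; omega⟩,
      ⟨(p.2 : ℕ), (mem_filter.mp hp).2.2⟩)) ?_ ?_ ?_ ?_ ?_).symm
  · intro p hp
    have h := (mem_filter.mp hp).2
    simp only [mem_filter, mem_univ, true_and]
    exact ⟨h, (p.2).isLt⟩
  · intro p hp
    have h := (mem_filter.mp hp).2
    simp only [mem_filter, mem_univ, true_and, Fin.lt_def] at *
    exact h.1
  · intro p _; rfl
  · intro p _; rfl
  · intro p _; rfl

lemma stmt10aux_L5 {N m : ℕ} (F : Fin N → Fin N → ℂ) :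
    ∏ p ∈ Finset.univ.filter (fun p : Fin N × Fin N => p.1 < p.2 ∧ m ≤ (p.1 : ℕ)), F p.1 p.2
      = ∏ p ∈ Finset.univ.filter (fun p : Fin (N - m) × Fin (N - m) => p.1 < p.2),
          F ⟨m + (p.1 : ℕ), by omega⟩ ⟨m + (p.2 : ℕ), by omega⟩ := by
  refine (Finset.prod_bij' (fun (p : Fin (N - m) × Fin (N - m)) _ =>
      ((⟨m + (p.1 : ℕ), by omega⟩ : Fin N), (⟨m + (p.2 : ℕ), by omega⟩ : Fin N)))
    (fun p hp => (⟨(p.1 : ℕ) - m, by have := p.1.isLt; have := (mem_filter.mp hp).2.2; omega⟩,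
      ⟨(p.2 : ℕ) - m, by
        have := p.2.isLt; have h := (mem_filter.mp hp).2
        have := Fin.lt_def.mp h.1; omega⟩)) ?_ ?_ ?_ ?_ ?_).symm
  · intro p hp
    have h := (mem_filter.mp hp).2
    simp only [mem_filter, mem_univ, true_and, Fin.lt_def] at *
    omega
  · intro p hp
    have h := (mem_filter.mp hp).2
    simp only [mem_filter, mem_univ, true_and, Fin.lt_def] at *
    omega
  · intro p _
    ext <;> simp
  · intro p hp
    have h := (mem_filter.mp hp).2
    have h1 : m ≤ (p.1 : ℕ) := h.2
    have h2 : m ≤ (p.2 : ℕ) := le_trans h.2 (le_of_lt (Fin.lt_def.mp h.1))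
    ext <;> simp <;> omega
  · intro p _; rfl

lemma stmt10aux_L6 {N m : ℕ} (F : Fin N × Fin N → ℂ) :
    ∏ p ∈ Finset.univ.filter (fun p : Fin N × Fin N => (p.1 : ℕ) < m ∧ m ≤ (p.2 : ℕ)), F p
      = ∏ a ∈ Finset.univ.filter (fun a : Fin N => (a : ℕ) < m),
          ∏ b ∈ Finset.univ.filter (fun b : Fin N => m ≤ (b : ℕ)), F (a, b) := by
  rw [← Finset.prod_product]
  congr 1
  ext p
  simp [Finset.mem_product]

lemma stmt10aux_Lsplit {N m : ℕ} (F : Fin N × Fin N → ℂ) :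
    ∏ p ∈ Finset.univ.filter (fun p : Fin N × Fin N => p.1 < p.2), F p
      = (∏ p ∈ Finset.univ.filter (fun p : Fin N × Fin N => p.1 < p.2 ∧ (p.2 : ℕ) < m), F p)
        * (∏ p ∈ Finset.univ.filter (fun p : Fin N × Fin N => (p.1 : ℕ) < m ∧ m ≤ (p.2 : ℕ)), F p)
        * (∏ p ∈ Finset.univ.filter (fun p : Fin N × Fin N => p.1 < p.2 ∧ m ≤ (p.1 : ℕ)), F p) := by
  have h1 := Finset.prod_filter_mul_prod_filter_not
    (Finset.univ.filter (fun p : Fin N × Fin N => p.1 < p.2)) (fun p => (p.2 : ℕ) < m) F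
  have h2 := Finset.prod_filter_mul_prod_filter_not
    ((Finset.univ.filter (fun p : Fin N × Fin N => p.1 < p.2)).filter
      (fun p => ¬ (p.2 : ℕ) < m)) (fun p => (p.1 : ℕ) < m) F
  have e1 : (Finset.univ.filter (fun p : Fin N × Fin N => p.1 < p.2)).filter
      (fun p => (p.2 : ℕ) < m)
      = Finset.univ.filter (fun p : Fin N × Fin N => p.1 < p.2 ∧ (p.2 : ℕ) < m) := by
    rw [Finset.filter_filter]
  have e2 : (((Finset.univ.filter (fun p : Fin N × Fin N => p.1 < p.2)).filter
      (fun p => ¬ (p.2 : ℕ) < m)).filter (fun p => (p.1 : ℕ) < m))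
      = Finset.univ.filter (fun p : Fin N × Fin N => (p.1 : ℕ) < m ∧ m ≤ (p.2 : ℕ)) := by
    rw [Finset.filter_filter, Finset.filter_filter]
    ext p
    simp only [mem_filter, mem_univ, true_and, Fin.lt_def, not_lt]
    omega
  have e3 : (((Finset.univ.filter (fun p : Fin N × Fin N => p.1 < p.2)).filter
      (fun p => ¬ (p.2 : ℕ) < m)).filter (fun p => ¬ (p.1 : ℕ) < m))
      = Finset.univ.filter (fun p : Fin N × Fin N => p.1 < p.2 ∧ m ≤ (p.1 : ℕ)) := by
    rw [Finset.filter_filter, Finset.filter_filter]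
    ext p
    simp only [mem_filter, mem_univ, true_and, Fin.lt_def, not_lt]
    omega
  rw [← h1, ← h2, e1, e2, e3, mul_assoc]

/-- Decomposition `B_σ(ξ) = B_{l₁}(ξ;I) G(ξ;I,Iᶜ) B_{l₂}(ξ;Iᶜ) (∏_{j≥m} ξ_{σ(j)})^{|I|}`
for `σ` mapping the first `m = |I|` positions onto `I`. -/
theorem stmt10 (N m : ℕ) (Δ : ℝ) (ξ : Fin N → ℂ)
    (I : Finset (Fin N)) (hI : I.card = m) (hIc : Iᶜ.card = N - m)
    (σ : Equiv.Perm (Fin N))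
    (l₁ : Equiv.Perm (Fin m)) (l₂ : Equiv.Perm (Fin (N - m)))
    (hσ1 : ∀ (k : Fin N) (hk : (k : ℕ) < m),
      σ k = (I.orderIsoOfFin hI (l₁ ⟨(k : ℕ), hk⟩) : Fin N))
    (hσ2 : ∀ (k : Fin N) (hk : m ≤ (k : ℕ)),
      σ k = (Iᶜ.orderIsoOfFin hIc (l₂ ⟨(k : ℕ) - m, by have := k.isLt; omega⟩) : Fin N)) :
    betheB N Δ ξ σ
      = betheB m Δ (fun a => ξ (I.orderIsoOfFin hI a : Fin N)) l₁ *
          betheG N Δ ξ I Iᶜ *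
          betheB (N - m) Δ (fun a => ξ (Iᶜ.orderIsoOfFin hIc a : Fin N)) l₂ *
          (∏ j ∈ Finset.univ.filter (fun j : Fin N => m ≤ (j : ℕ)), ξ (σ j)) ^ I.card := by
  classical
  have hmN : m ≤ N := by
    have h := Finset.card_le_univ I
    rw [hI] at h
    simpa using h
  have hadd : m + (N - m) = N := by omega
  set c : Fin m ⊕ Fin (N - m) ≃ Fin N := finSumFinEquiv.trans (finCongr hadd) with hc
  set bp : Equiv.Perm (Fin N) := (c.symm.trans (Equiv.sumCongr l₁ l₂)).trans c with hbp
  set τ : Equiv.Perm (Fin N) := σ * bp⁻¹ with hτdef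
  have hc1 : ∀ a : Fin m, c (Sum.inl a) = Fin.castLE hmN a := by
    intro a; ext; simp [hc]
  have hc2 : ∀ b : Fin (N - m), c (Sum.inr b) = ⟨m + (b : ℕ), by omega⟩ := by
    intro b; ext; simp [hc]
  have hbp1 : ∀ a : Fin m, bp (Fin.castLE hmN a) = Fin.castLE hmN (l₁ a) := by
    intro a
    show c ((Equiv.sumCongr l₁ l₂) (c.symm (Fin.castLE hmN a))) = _
    rw [← hc1 a, Equiv.symm_apply_apply, Equiv.sumCongr_apply, Sum.map_inl, hc1]
  have hbp2 : ∀ b : Fin (N - m),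
      bp (⟨m + (b : ℕ), by omega⟩ : Fin N) = ⟨m + ((l₂ b : Fin (N - m)) : ℕ), by omega⟩ := by
    intro b
    show c ((Equiv.sumCongr l₁ l₂) (c.symm _)) = _
    rw [← hc2 b, Equiv.symm_apply_apply, Equiv.sumCongr_apply, Sum.map_inr, hc2]
  have hσc1 : ∀ a : Fin m, σ (Fin.castLE hmN a) = ((I.orderIsoOfFin hI (l₁ a) : Fin N)) := by
    intro a
    exact hσ1 (Fin.castLE hmN a) a.isLt
  have hσc2 : ∀ b : Fin (N - m),
      σ (⟨m + (b : ℕ), by omega⟩ : Fin N) = ((Iᶜ.orderIsoOfFin hIc (l₂ b) : Fin N)) := by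
    intro b
    rw [hσ2 (⟨m + (b : ℕ), by omega⟩ : Fin N) (by simp)]
    congr 2
    ext
    simp
  have hτbp : ∀ k : Fin N, τ (bp k) = σ k := by
    intro k
    simp [hτdef, Equiv.Perm.mul_apply]
  have hτ1 : ∀ a : Fin m, τ (Fin.castLE hmN a) = ((I.orderIsoOfFin hI a : Fin N)) := by
    intro a
    have h := hτbp (Fin.castLE hmN (l₁⁻¹ a))
    rw [hbp1, Equiv.Perm.coe_inv, Equiv.apply_symm_apply] at h
    rw [h, hσc1, Equiv.apply_symm_apply]
  have hτ2 : ∀ b : Fin (N - m),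
      τ (⟨m + (b : ℕ), by omega⟩ : Fin N) = ((Iᶜ.orderIsoOfFin hIc b : Fin N)) := by
    intro b
    have h := hτbp (⟨m + ((l₂⁻¹ b : Fin (N - m)) : ℕ), by omega⟩ : Fin N)
    simp only [hbp2, show l₂ (l₂⁻¹ b) = b from l₂.apply_symm_apply b] at h
    rw [h, hσc2, show l₂ (l₂⁻¹ b) = b from l₂.apply_symm_apply b]
  -- sign decomposition
  have hsign : ((Equiv.Perm.sign σ : ℤ) : ℂ)
      = ((Equiv.Perm.sign l₁ : ℤ) : ℂ) * ((Equiv.Perm.sign l₂ : ℤ) : ℂ)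
        * ((Equiv.Perm.sign τ : ℤ) : ℂ) := by
    have hσeq : σ = τ * bp := by
      rw [hτdef]
      group
    have hbps : Equiv.Perm.sign bp = Equiv.Perm.sign l₁ * Equiv.Perm.sign l₂ := by
      rw [hbp, Equiv.Perm.sign_symm_trans_trans, Equiv.Perm.sign_sumCongr]
    calc ((Equiv.Perm.sign σ : ℤ) : ℂ) = ((Equiv.Perm.sign (τ * bp) : ℤ) : ℂ) := by rw [← hσeq]
      _ = _ := by
        rw [map_mul, hbps]
        push_cast
        ring
  -- sign of τ
  have hsτ : ((Equiv.Perm.sign τ : ℤ) : ℂ)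
      = ∏ α ∈ I, ∏ β ∈ Iᶜ, (if β < α then (-1 : ℂ) else 1) := by
    rw [stmt10aux_sign_eq_prod_pairs, stmt10aux_Lsplit (m := m)]
    have f1 : (∏ p ∈ Finset.univ.filter (fun p : Fin N × Fin N => p.1 < p.2 ∧ (p.2 : ℕ) < m),
        (if τ p.2 < τ p.1 then (-1 : ℂ) else 1)) = 1 := by
      rw [stmt10aux_L4 hmN (fun x y => if τ y < τ x then (-1 : ℂ) else 1)]
      apply Finset.prod_eq_one
      intro p hp
      rw [hτ1, hτ1, if_neg]
      have hlt : p.1 < p.2 := (mem_filter.mp hp).2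
      have : (I.orderIsoOfFin hI p.1 : Fin N) < (I.orderIsoOfFin hI p.2 : Fin N) := by
        exact_mod_cast (I.orderIsoOfFin hI).lt_iff_lt.mpr hlt
      exact lt_asymm this
    have f3 : (∏ p ∈ Finset.univ.filter (fun p : Fin N × Fin N => p.1 < p.2 ∧ m ≤ (p.1 : ℕ)),
        (if τ p.2 < τ p.1 then (-1 : ℂ) else 1)) = 1 := by
      rw [stmt10aux_L5 (m := m) (fun x y => if τ y < τ x then (-1 : ℂ) else 1)]
      apply Finset.prod_eq_one
      intro p hp
      rw [hτ2, hτ2, if_neg]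
      have hlt : p.1 < p.2 := (mem_filter.mp hp).2
      have : (Iᶜ.orderIsoOfFin hIc p.1 : Fin N) < (Iᶜ.orderIsoOfFin hIc p.2 : Fin N) := by
        exact_mod_cast (Iᶜ.orderIsoOfFin hIc).lt_iff_lt.mpr hlt
      exact lt_asymm this
    have f2 : (∏ p ∈ Finset.univ.filter
          (fun p : Fin N × Fin N => (p.1 : ℕ) < m ∧ m ≤ (p.2 : ℕ)),
        (if τ p.2 < τ p.1 then (-1 : ℂ) else 1))
        = ∏ α ∈ I, ∏ β ∈ Iᶜ, (if β < α then (-1 : ℂ) else 1) := by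
      rw [stmt10aux_L6, stmt10aux_L1 hmN]
      rw [← stmt10aux_L3 I hI (fun α => ∏ β ∈ Iᶜ, (if β < α then (-1 : ℂ) else 1))]
      refine Finset.prod_congr rfl fun a _ => ?_
      rw [stmt10aux_L2 (m := m)]
      rw [← stmt10aux_L3 Iᶜ hIc
        (fun β => (if β < ((I.orderIsoOfFin hI a : Fin N)) then (-1 : ℂ) else 1))]
      refine Finset.prod_congr rfl fun b _ => ?_
      rw [hτ1, hτ2]
    rw [f1, f3, f2, one_mul, mul_one]
  -- pair product decomposition
  have hP : (∏ p ∈ Finset.univ.filter (fun p : Fin N × Fin N => p.1 < p.2),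
        (1 + ξ (σ p.1) * ξ (σ p.2) - 2 * (Δ : ℂ) * ξ (σ p.1)))
      = (∏ p ∈ Finset.univ.filter (fun p : Fin m × Fin m => p.1 < p.2),
          (1 + ξ ((I.orderIsoOfFin hI (l₁ p.1) : Fin N)) * ξ ((I.orderIsoOfFin hI (l₁ p.2) : Fin N))
            - 2 * (Δ : ℂ) * ξ ((I.orderIsoOfFin hI (l₁ p.1) : Fin N))))
        * (∏ α ∈ I, ∏ β ∈ Iᶜ, (1 + ξ α * ξ β - 2 * (Δ : ℂ) * ξ α))
        * (∏ p ∈ Finset.univ.filter (fun p : Fin (N - m) × Fin (N - m) => p.1 < p.2),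
          (1 + ξ ((Iᶜ.orderIsoOfFin hIc (l₂ p.1) : Fin N)) * ξ ((Iᶜ.orderIsoOfFin hIc (l₂ p.2) : Fin N))
            - 2 * (Δ : ℂ) * ξ ((Iᶜ.orderIsoOfFin hIc (l₂ p.1) : Fin N)))) := by
    rw [stmt10aux_Lsplit (m := m)
      (fun p => (1 + ξ (σ p.1) * ξ (σ p.2) - 2 * (Δ : ℂ) * ξ (σ p.1)))]
    congr 1
    · congr 1
      · rw [stmt10aux_L4 hmN (fun x y => (1 + ξ (σ x) * ξ (σ y) - 2 * (Δ : ℂ) * ξ (σ x)))]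
        refine Finset.prod_congr rfl fun p _ => ?_
        rw [hσc1, hσc1]
      · rw [stmt10aux_L6, stmt10aux_L1 hmN]
        rw [← stmt10aux_L3 I hI
          (fun α => ∏ β ∈ Iᶜ, (1 + ξ α * ξ β - 2 * (Δ : ℂ) * ξ α))]
        rw [← Equiv.prod_comp l₁
          (fun a => ∏ β ∈ Iᶜ, (1 + ξ ((I.orderIsoOfFin hI a : Fin N)) * ξ β
            - 2 * (Δ : ℂ) * ξ ((I.orderIsoOfFin hI a : Fin N))))]
        refine Finset.prod_congr rfl fun a _ => ?_
        rw [stmt10aux_L2 (m := m)]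
        rw [← stmt10aux_L3 Iᶜ hIc
          (fun β => (1 + ξ ((I.orderIsoOfFin hI (l₁ a) : Fin N)) * ξ β
            - 2 * (Δ : ℂ) * ξ ((I.orderIsoOfFin hI (l₁ a) : Fin N))))]
        rw [← Equiv.prod_comp l₂
          (fun b => (1 + ξ ((I.orderIsoOfFin hI (l₁ a) : Fin N)) * ξ ((Iᶜ.orderIsoOfFin hIc b : Fin N))
            - 2 * (Δ : ℂ) * ξ ((I.orderIsoOfFin hI (l₁ a) : Fin N))))]
        refine Finset.prod_congr rfl fun b _ => ?_
        rw [hσc1, hσc2]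
    · rw [stmt10aux_L5 (m := m) (fun x y => (1 + ξ (σ x) * ξ (σ y) - 2 * (Δ : ℂ) * ξ (σ x)))]
      refine Finset.prod_congr rfl fun p _ => ?_
      rw [hσc2, hσc2]
  -- monomial decomposition
  have hM : (∏ j, ξ (σ j) ^ ((j : ℕ) + 1))
      = (∏ a : Fin m, ξ ((I.orderIsoOfFin hI (l₁ a) : Fin N)) ^ ((a : ℕ) + 1))
        * ((∏ b : Fin (N - m), ξ ((Iᶜ.orderIsoOfFin hIc (l₂ b) : Fin N)) ^ ((b : ℕ) + 1))
          * (∏ j ∈ Finset.univ.filter (fun j : Fin N => m ≤ (j : ℕ)), ξ (σ j)) ^ m) := by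
    rw [← Finset.prod_filter_mul_prod_filter_not Finset.univ (fun j : Fin N => (j : ℕ) < m)
      (fun j => ξ (σ j) ^ ((j : ℕ) + 1))]
    congr 1
    · rw [stmt10aux_L1 hmN (fun j => ξ (σ j) ^ ((j : ℕ) + 1))]
      refine Finset.prod_congr rfl fun a _ => ?_
      rw [hσc1, Fin.coe_castLE]
    · have hfilter : Finset.univ.filter (fun j : Fin N => ¬ (j : ℕ) < m)
          = Finset.univ.filter (fun j : Fin N => m ≤ (j : ℕ)) := by
        ext j; simp [not_lt]
      rw [hfilter]
      have hsplit : ∀ j ∈ Finset.univ.filter (fun j : Fin N => m ≤ (j : ℕ)),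
          ξ (σ j) ^ ((j : ℕ) + 1) = ξ (σ j) ^ (((j : ℕ) - m) + 1) * ξ (σ j) ^ m := by
        intro j hj
        rw [← pow_add]
        congr 1
        have := (Finset.mem_filter.mp hj).2
        omega
      rw [Finset.prod_congr rfl hsplit, Finset.prod_mul_distrib, Finset.prod_pow]
      congr 1
      rw [stmt10aux_L2 (m := m) (fun j => ξ (σ j) ^ (((j : ℕ) - m) + 1))]
      refine Finset.prod_congr rfl fun b _ => ?_
      rw [hσc2]
      congr 1
      simp
  -- assemble
  simp only [betheB, betheG]
  rw [hsign, hP, hM, hsτ, hI]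
  ring
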